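/- Let A and B be positive definite n×n complex matrices and let p be a real number with p ≤ 0 or p ≥ 1. Then Tr(A^p B^{1−p}) ≥ p · Tr(A) + (1−p) · Tr(B), where the trace of the product of the two positive definite matrices A^p and B^{1−p} is a real number. -/

import Mathlib

/-!
Diagonalise `A = U diag(a) U*` and `B = V diag(b) V*` and put `W = U* V`. Then
`Tr(A^p B^(1-p)) = ∑ i j, |W i j|² a_i^p b_j^(1-p)`, and since `W` is unitary the weights
`|W i j|²` form a doubly stochastic matrix, which also gives
`p Tr A + (1-p) Tr B = ∑ i j, |W i j|² (p a_i + (1-p) b_j)`. The theorem is therefore a convex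
combination of the scalar reversed Young inequalities `p a + (1-p) b ≤ a^p b^(1-p)`, valid for
`p ∉ (0, 1)` by Bernoulli's inequality applied to `a / b`.
-/

open Matrix ComplexOrder

/-- Functional calculus for Hermitian complex matrices: apply `f` to the eigenvalues.
(For non-Hermitian input we return `0`; all matrices considered below are Hermitian.) -/
noncomputable def mfun {n : ℕ} (f : ℝ → ℝ) (A : Matrix (Fin n) (Fin n) ℂ) :
    Matrix (Fin n) (Fin n) ℂ :=
  if hA : A.IsHermitian then
    (hA.eigenvectorUnitary : Matrix (Fin n) (Fin n) ℂ) *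
      Matrix.diagonal (fun i => (f (hA.eigenvalues i) : ℂ)) *
      (hA.eigenvectorUnitary : Matrix (Fin n) (Fin n) ℂ)ᴴ
  else 0

/-- Real matrix power `A^r` of a Hermitian matrix, via functional calculus
(`t ↦ t ^ r` is the real power, with the convention `0 ^ r = 0` for `r ≠ 0`). -/
noncomputable def mpow {n : ℕ} (A : Matrix (Fin n) (Fin n) ℂ) (r : ℝ) :
    Matrix (Fin n) (Fin n) ℂ :=
  mfun (fun t => t ^ r) A

namespace Real

theorem mul_add_one_sub_mul_le_rpow_mul_rpow_of_one_le {a b p : ℝ} (ha : 0 ≤ a) (hb : 0 < b)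
    (hp : 1 ≤ p) : p * a + (1 - p) * b ≤ a ^ p * b ^ (1 - p) := by
  have bernoulli := one_add_mul_self_le_rpow_one_add
    (show -1 ≤ a / b - 1 by linarith [div_nonneg ha hb.le]) hp
  rw [add_sub_cancel] at bernoulli
  calc p * a + (1 - p) * b = b * (1 + p * (a / b - 1)) := by field_simp; ring
    _ ≤ b * (a / b) ^ p := mul_le_mul_of_nonneg_left bernoulli hb.le
    _ = a ^ p * b ^ (1 - p) := by
        rw [div_rpow ha hb.le, rpow_sub hb, rpow_one]
        field_simp

theorem mul_add_one_sub_mul_le_rpow_mul_rpow {a b p : ℝ} (ha : 0 < a) (hb : 0 < b)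
    (hp : p ≤ 0 ∨ 1 ≤ p) : p * a + (1 - p) * b ≤ a ^ p * b ^ (1 - p) := by
  rcases hp with hp | hp
  · have h := mul_add_one_sub_mul_le_rpow_mul_rpow_of_one_le hb.le ha (p := 1 - p) (by linarith)
    rw [sub_sub_cancel] at h
    linarith
  · exact mul_add_one_sub_mul_le_rpow_mul_rpow_of_one_le ha.le hb hp

end Real

namespace Matrix

variable {n 𝕜 : Type*} [Fintype n] [DecidableEq n] [RCLike 𝕜]

theorem sum_sum_mul_add_of_mem_doublyStochastic {R : Type*} [Semiring R] [PartialOrder R]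
    [IsOrderedRing R] {M : Matrix n n R} (hM : M ∈ doublyStochastic R n) (x y : n → R) :
    ∑ i, ∑ j, M i j * (x i + y j) = ∑ i, x i + ∑ j, y j := by
  simp only [mul_add, Finset.sum_add_distrib, ← Finset.sum_mul]
  rw [Finset.sum_comm (f := fun i j => M i j * y j)]
  simp only [← Finset.sum_mul, sum_row_of_mem_doublyStochastic hM,
    sum_col_of_mem_doublyStochastic hM, one_mul]

theorem of_norm_sq_mem_doublyStochastic {U : Matrix n n 𝕜} (hU : U ∈ unitaryGroup n 𝕜) :
    of (fun i j => ‖U i j‖ ^ 2) ∈ doublyStochastic ℝ n := by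
  have row (i : n) : ∑ j, ‖U i j‖ ^ 2 = 1 := by
    have h := congr_fun₂ (mem_unitaryGroup_iff.mp hU) i i
    simp only [mul_apply, star_apply, RCLike.star_def, RCLike.mul_conj, one_apply_eq] at h
    exact_mod_cast h
  have col (j : n) : ∑ i, ‖U i j‖ ^ 2 = 1 := by
    have h := congr_fun₂ (mem_unitaryGroup_iff'.mp hU) j j
    simp only [mul_apply, star_apply, RCLike.star_def, mul_comm, RCLike.mul_conj,
      one_apply_eq] at h
    exact_mod_cast h
  exact mem_doublyStochastic_iff_sum.mpr ⟨fun _ _ => sq_nonneg _, row, col⟩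

theorem trace_diagonal_mul_mul_diagonal_mul_conjTranspose (W : Matrix n n 𝕜) (d e : n → ℝ) :
    (diagonal (fun i => (d i : 𝕜)) * W * diagonal (fun j => (e j : 𝕜)) * Wᴴ).trace =
      ((∑ i, ∑ j, ‖W i j‖ ^ 2 * (d i * e j) : ℝ) : 𝕜) := by
  push_cast
  refine Finset.sum_congr rfl fun i _ => Finset.sum_congr rfl fun j _ => ?_
  simp only [mul_diagonal, diagonal_mul, conjTranspose_apply, RCLike.star_def]
  rw [← RCLike.mul_conj]
  ring

theorem trace_conj_diagonal_mul_conj_diagonal (U V : Matrix n n 𝕜) (d e : n → ℝ) :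
    (U * diagonal (fun i => (d i : 𝕜)) * Uᴴ * (V * diagonal (fun j => (e j : 𝕜)) * Vᴴ)).trace =
      ((∑ i, ∑ j, ‖(Uᴴ * V) i j‖ ^ 2 * (d i * e j) : ℝ) : 𝕜) := by
  rw [← trace_diagonal_mul_mul_diagonal_mul_conjTranspose, conjTranspose_mul,
    conjTranspose_conjTranspose]
  simp only [Matrix.mul_assoc]
  rw [trace_mul_comm U]
  simp only [Matrix.mul_assoc]

end Matrix

section FunctionalCalculus

variable {n : ℕ} {A B : Matrix (Fin n) (Fin n) ℂ}

theorem mfun_of_isHermitian (hA : A.IsHermitian) (f : ℝ → ℝ) :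
    mfun f A = (hA.eigenvectorUnitary : Matrix (Fin n) (Fin n) ℂ) *
      diagonal (fun i => (f (hA.eigenvalues i) : ℂ)) *
      (hA.eigenvectorUnitary : Matrix (Fin n) (Fin n) ℂ)ᴴ :=
  dif_pos hA

theorem trace_mfun_mul_mfun (hA : A.IsHermitian) (hB : B.IsHermitian) (f g : ℝ → ℝ) :
    (mfun f A * mfun g B).trace =
      ((∑ i, ∑ j, ‖((hA.eigenvectorUnitary : Matrix (Fin n) (Fin n) ℂ)ᴴ *
          hB.eigenvectorUnitary) i j‖ ^ 2 * (f (hA.eigenvalues i) * g (hB.eigenvalues j)) : ℝ) :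
        ℂ) := by
  rw [mfun_of_isHermitian hA, mfun_of_isHermitian hB]
  -- `exact` rather than `rw`: `mfun` casts with `Complex.ofReal`, the lemma with `RCLike.ofReal`.
  exact trace_conj_diagonal_mul_conj_diagonal _ _ (fun i => f _) (fun j => g _)

end FunctionalCalculus

/-- Reversed tracial Young inequality, `p ≤ 0` or `p ≥ 1`: for positive definite
complex matrices `A`, `B` one has `Tr(A^p B^(1-p)) ≥ p Tr A + (1-p) Tr B` (an
inequality of complex numbers in the complex order, so both sides are real). -/
theorem trace_young_ge {n : ℕ} (A B : Matrix (Fin n) (Fin n) ℂ)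
    (hA : A.PosDef) (hB : B.PosDef) (p : ℝ) (hp : p ≤ 0 ∨ 1 ≤ p) :
    (p : ℂ) * A.trace + ((1 : ℂ) - (p : ℂ)) * B.trace ≤
      (mpow A p * mpow B (1 - p)).trace := by
  rw [mpow, mpow, trace_mfun_mul_mfun hA.1 hB.1, hA.1.trace_eq_sum_eigenvalues,
    hB.1.trace_eq_sum_eigenvalues]
  set a := hA.1.eigenvalues
  set b := hB.1.eigenvalues
  set W := (hA.1.eigenvectorUnitary : Matrix (Fin n) (Fin n) ℂ)ᴴ * hB.1.eigenvectorUnitary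
  have hM : of (fun i j => ‖W i j‖ ^ 2) ∈ doublyStochastic ℝ (Fin n) :=
    of_norm_sq_mem_doublyStochastic (star hA.1.eigenvectorUnitary * hB.1.eigenvectorUnitary).2
  have key : p * ∑ i, a i + (1 - p) * ∑ j, b j ≤
      ∑ i, ∑ j, ‖W i j‖ ^ 2 * (a i ^ p * b j ^ (1 - p)) :=
    calc p * ∑ i, a i + (1 - p) * ∑ j, b j
        = ∑ i, ∑ j, ‖W i j‖ ^ 2 * (p * a i + (1 - p) * b j) := by
          rw [Finset.mul_sum, Finset.mul_sum]
          exact (sum_sum_mul_add_of_mem_doublyStochastic hM _ _).symm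
      _ ≤ _ := Finset.sum_le_sum fun i _ => Finset.sum_le_sum fun j _ =>
          mul_le_mul_of_nonneg_left
            (Real.mul_add_one_sub_mul_le_rpow_mul_rpow (hA.eigenvalues_pos i)
              (hB.eigenvalues_pos j) hp)
            (sq_nonneg _)
  simpa using Complex.real_le_real.mpr key
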